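/- The tetrahedron E_{(6,3)} = conv{(1,0,0),(-1,-1,0),(1,2,3),(-1,1,-3)} contains exactly six lattice points, and its sublattice index equals 3. -/
import Mathlib

set_option linter.unnecessarySeqFocus false

/-- embedding of integer points into `ℝ³` -/
noncomputable def rr (v : Fin 3 → ℤ) : Fin 3 → ℝ := fun i => (v i : ℝ)

/-- The subgroup of `ℤ³` generated by all differences of lattice points;
its index is the sublattice index. -/
def diffLat (A : Set (Fin 3 → ℤ)) : AddSubgroup (Fin 3 → ℤ) :=
  AddSubgroup.closure {v | ∃ x ∈ A, ∃ y ∈ A, v = x - y}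

/-- The tetrahedron `E_{(6,3)}`. -/
noncomputable def E63 : Set (Fin 3 → ℝ) :=
  convexHull ℝ {rr ![1, 0, 0], rr ![-1, -1, 0], rr ![1, 2, 3], rr ![-1, 1, -3]}

def Hs : Set (Fin 3 → ℝ) := {x | -3*x 0+6*x 1-4*x 2 ≥ -3 ∧ -3*x 0+6*x 1+4*x 2 ≥ -3 ∧
  -9*x 0-6*x 1+4*x 2 ≥ -9 ∧ 15*x 0-6*x 1-4*x 2 ≥ -9}

lemma convexHs : Convex ℝ Hs := by
  intro x hx y hy a b ha hb hab
  obtain ⟨h1,h2,h3,h4⟩ := hx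
  obtain ⟨g1,g2,g3,g4⟩ := hy
  refine ⟨?_,?_,?_,?_⟩ <;>
  · simp only [Pi.add_apply, Pi.smul_apply, smul_eq_mul]
    nlinarith [mul_le_mul_of_nonneg_left h1 ha, mul_le_mul_of_nonneg_left g1 hb,
      mul_le_mul_of_nonneg_left h2 ha, mul_le_mul_of_nonneg_left g2 hb,
      mul_le_mul_of_nonneg_left h3 ha, mul_le_mul_of_nonneg_left g3 hb,
      mul_le_mul_of_nonneg_left h4 ha, mul_le_mul_of_nonneg_left g4 hb]

lemma hullsub : E63 ⊆ Hs := by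
  rw [E63]
  apply convexHull_min _ convexHs
  intro p hp
  simp only [Set.mem_insert_iff, Set.mem_singleton_iff] at hp
  rcases hp with h|h|h|h <;> subst h <;>
    refine ⟨?_,?_,?_,?_⟩ <;> simp [rr, Hs] <;> norm_num

lemma vertmem (w : Fin 3 → ℤ)
    (h : rr w ∈ ({rr ![1, 0, 0], rr ![-1, -1, 0], rr ![1, 2, 3], rr ![-1, 1, -3]} :
      Set (Fin 3 → ℝ))) : rr w ∈ E63 :=
  subset_convexHull ℝ _ h

lemma midmem :
    rr ![0,0,0] ∈ E63 ∧ rr ![0,1,0] ∈ E63 := by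
  have c := convex_convexHull ℝ
    ({rr ![1, 0, 0], rr ![-1, -1, 0], rr ![1, 2, 3], rr ![-1, 1, -3]} : Set (Fin 3 → ℝ))
  have hA : rr ![1,0,0] ∈ E63 := subset_convexHull ℝ _ (by simp)
  have hB : rr ![-1,-1,0] ∈ E63 := subset_convexHull ℝ _ (by simp)
  have hC : rr ![1,2,3] ∈ E63 := subset_convexHull ℝ _ (by simp)
  have hD : rr ![-1,1,-3] ∈ E63 := subset_convexHull ℝ _ (by simp)
  rw [E63] at *
  have hm1 : (1/2:ℝ) • rr ![1,0,0] + (1/2:ℝ) • rr ![-1,-1,0] ∈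
      convexHull ℝ {rr ![1, 0, 0], rr ![-1, -1, 0], rr ![1, 2, 3], rr ![-1, 1, -3]} :=
    c hA hB (by norm_num) (by norm_num) (by norm_num)
  have hm2 : (1/2:ℝ) • rr ![1,2,3] + (1/2:ℝ) • rr ![-1,1,-3] ∈
      convexHull ℝ {rr ![1, 0, 0], rr ![-1, -1, 0], rr ![1, 2, 3], rr ![-1, 1, -3]} :=
    c hC hD (by norm_num) (by norm_num) (by norm_num)
  constructor
  · have := c hm1 hm2 (by norm_num : (0:ℝ) ≤ 3/4) (by norm_num : (0:ℝ) ≤ 1/4) (by norm_num)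
    convert this using 1
    funext i
    fin_cases i <;> simp [rr] <;> norm_num
  · have := c hm1 hm2 (by norm_num : (0:ℝ) ≤ 1/4) (by norm_num : (0:ℝ) ≤ 3/4) (by norm_num)
    convert this using 1
    funext i
    fin_cases i <;> simp [rr] <;> norm_num

def S6 : Set (Fin 3 → ℤ) :=
  {![1,0,0], ![-1,-1,0], ![1,2,3], ![-1,1,-3], ![0,0,0], ![0,1,0]}

lemma setEq : {v : Fin 3 → ℤ | rr v ∈ E63} = S6 := by
  ext v
  constructor
  · intro hv
    obtain ⟨h1,h2,h3,h4⟩ := hullsub hv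
    simp only [rr] at h1 h2 h3 h4
    have h1' : -3*v 0+6*v 1-4*v 2 ≥ -3 := by exact_mod_cast h1
    have h2' : -3*v 0+6*v 1+4*v 2 ≥ -3 := by exact_mod_cast h2
    have h3' : -9*v 0-6*v 1+4*v 2 ≥ -9 := by exact_mod_cast h3
    have h4' : 15*v 0-6*v 1-4*v 2 ≥ -9 := by exact_mod_cast h4
    set x := v 0; set y := v 1; set z := v 2
    have key : (x=1∧y=0∧z=0)∨(x=-1∧y=-1∧z=0)∨(x=1∧y=2∧z=3)∨(x=-1∧y=1∧z=-3)∨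
        (x=0∧y=0∧z=0)∨(x=0∧y=1∧z=0) := by
      have hx1 : -1 ≤ x := by linarith
      have hx2 : x ≤ 1 := by linarith
      have hy1 : x - 1 ≤ 2*y := by linarith
      have hy2 : 2*y ≤ x + 3 := by linarith
      have hz1 : 3*x - 3 ≤ 2*z := by linarith
      have hz2 : 2*z ≤ 3*x + 3 := by linarith
      have hy1' : -1 ≤ y := by omega
      have hy2' : y ≤ 2 := by omega
      have hz1' : -3 ≤ z := by omega
      have hz2' : z ≤ 3 := by omega
      interval_cases x <;> interval_cases y <;> interval_cases z <;> omega
    have hv3 : ∀ a b c : ℤ, x = a → y = b → z = c → v = ![a,b,c] := by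
      intro a b c ha hb hc
      funext i; fin_cases i <;> simpa
    rcases key with ⟨e1,e2,e3⟩|⟨e1,e2,e3⟩|⟨e1,e2,e3⟩|⟨e1,e2,e3⟩|⟨e1,e2,e3⟩|⟨e1,e2,e3⟩ <;>
      rw [S6] <;> simp only [Set.mem_insert_iff, Set.mem_singleton_iff]
    · exact Or.inl (hv3 _ _ _ e1 e2 e3)
    · exact Or.inr (Or.inl (hv3 _ _ _ e1 e2 e3))
    · exact Or.inr (Or.inr (Or.inl (hv3 _ _ _ e1 e2 e3)))
    · exact Or.inr (Or.inr (Or.inr (Or.inl (hv3 _ _ _ e1 e2 e3))))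
    · exact Or.inr (Or.inr (Or.inr (Or.inr (Or.inl (hv3 _ _ _ e1 e2 e3)))))
    · exact Or.inr (Or.inr (Or.inr (Or.inr (Or.inr (hv3 _ _ _ e1 e2 e3)))))
  · intro hv
    rw [S6] at hv
    simp only [Set.mem_insert_iff, Set.mem_singleton_iff] at hv
    rcases hv with h|h|h|h|h|h <;> subst h
    · exact vertmem _ (by simp)
    · exact vertmem _ (by simp)
    · exact vertmem _ (by simp)
    · exact vertmem _ (by simp)
    · exact midmem.1
    · exact midmem.2

lemma card6 : ({v : Fin 3 → ℤ | rr v ∈ E63}).ncard = 6 := by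
  rw [setEq]
  have : S6 = (↑({![1,0,0], ![-1,-1,0], ![1,2,3], ![-1,1,-3], ![0,0,0], ![0,1,0]} :
      Finset (Fin 3 → ℤ))) := by
    rw [S6]; simp
  rw [this, Set.ncard_coe_finset]
  decide

def phi : (Fin 3 → ℤ) →+ ZMod 3 where
  toFun v := ((v 2 : ℤ) : ZMod 3)
  map_zero' := by simp
  map_add' := by intro a b; push_cast; simp

lemma kerEq : diffLat S6 = phi.ker := by
  apply le_antisymm
  · rw [diffLat]
    rw [AddSubgroup.closure_le]
    rintro w ⟨x, hx, y, hy, rfl⟩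
    have key : ∀ u ∈ S6, ((u 2 : ℤ) : ZMod 3) = 0 := by
      intro u hu
      rw [S6] at hu
      simp only [Set.mem_insert_iff, Set.mem_singleton_iff] at hu
      rcases hu with h|h|h|h|h|h <;> subst h <;> decide
    have : phi (x - y) = 0 := by
      simp only [phi, AddMonoidHom.coe_mk, ZeroHom.coe_mk, Pi.sub_apply]
      push_cast
      rw [key x hx, key y hy, sub_zero]
    exact this
  · intro v hv
    have hv' : ((v 2 : ℤ) : ZMod 3) = 0 := hv
    have hdvd : (3:ℤ) ∣ v 2 := by
      rwa [ZMod.intCast_zmod_eq_zero_iff_dvd] at hv'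
    obtain ⟨k, hk⟩ := hdvd
    have m0 : (![0,0,0] : Fin 3 → ℤ) ∈ S6 := by rw [S6]; simp
    have m1 : (![1,0,0] : Fin 3 → ℤ) ∈ S6 := by rw [S6]; simp
    have m2 : (![0,1,0] : Fin 3 → ℤ) ∈ S6 := by rw [S6]; simp
    have m3 : (![1,2,3] : Fin 3 → ℤ) ∈ S6 := by rw [S6]; simp
    have g1 : (![1,0,0] : Fin 3 → ℤ) ∈ diffLat S6 := by
      apply AddSubgroup.subset_closure
      exact ⟨![1,0,0], m1, ![0,0,0], m0, by funext i; fin_cases i <;> simp⟩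
    have g2 : (![0,1,0] : Fin 3 → ℤ) ∈ diffLat S6 := by
      apply AddSubgroup.subset_closure
      exact ⟨![0,1,0], m2, ![0,0,0], m0, by funext i; fin_cases i <;> simp⟩
    have g3' : (![0,2,3] : Fin 3 → ℤ) ∈ diffLat S6 := by
      apply AddSubgroup.subset_closure
      exact ⟨![1,2,3], m3, ![1,0,0], m1, by funext i; fin_cases i <;> simp⟩
    have g3 : (![0,0,3] : Fin 3 → ℤ) ∈ diffLat S6 := by
      have := AddSubgroup.sub_mem _ g3' (AddSubgroup.zsmul_mem _ g2 2)
      convert this using 1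
      funext i; fin_cases i <;> simp
    have hvrep : v = (v 0) • ![1,0,0] + (v 1) • ![0,1,0] + k • ![0,0,3] := by
      funext i; fin_cases i <;>
        simp [Pi.smul_apply, smul_eq_mul] <;> omega
    rw [hvrep]
    exact AddSubgroup.add_mem _
      (AddSubgroup.add_mem _ (AddSubgroup.zsmul_mem _ g1 _) (AddSubgroup.zsmul_mem _ g2 _))
      (AddSubgroup.zsmul_mem _ g3 _)

lemma idx3 : (diffLat S6).index = 3 := by
  rw [kerEq]
  have hsurj : Function.Surjective phi := by
    intro c
    refine ⟨fun _ => (c.val : ℤ), ?_⟩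
    simp [phi, ZMod.natCast_val, ZMod.cast_id]
  rw [AddSubgroup.index_ker, AddMonoidHom.range_eq_top.mpr hsurj, AddSubgroup.card_top,
    Nat.card_zmod]

theorem stmt13 :
    {v : Fin 3 → ℤ | rr v ∈ E63}.ncard = 6 ∧
    (diffLat {v : Fin 3 → ℤ | rr v ∈ E63}).index = 3 := by
  exact ⟨card6, by rw [setEq]; exact idx3⟩
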